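/- With G = k^× × K₁ × K₂ the Heisenberg-type group of type (d₁,…,d_p), a weight-n G-module is irreducible if and only if it has dimension D_n = (d₁⋯d_p)/(gcd(n,d₁)⋯gcd(n,d_p)). -/

import Mathlib

abbrev ThetaK1 (p : ℕ) (d : Fin p → ℕ) : Type := ∀ i : Fin p, Multiplicative (ZMod (d i))

abbrev ThetaK2 (k : Type) [Field k] (p : ℕ) (d : Fin p → ℕ) : Type := ThetaK1 p d →* kˣ

def Heis (k : Type) [Field k] (p : ℕ) (d : Fin p → ℕ) : Type :=
  kˣ × ThetaK1 p d × ThetaK2 k p d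

namespace Heis

variable {k : Type} [Field k] {p : ℕ} {d : Fin p → ℕ}

def mk (α : kˣ) (x : ThetaK1 p d) (χ : ThetaK2 k p d) : Heis k p d := (α, x, χ)

instance : Mul (Heis k p d) :=
  ⟨fun a b => (a.1 * b.1 * b.2.2 a.2.1, a.2.1 * b.2.1, a.2.2 * b.2.2)⟩

instance : One (Heis k p d) := ⟨((1 : kˣ), 1, 1)⟩

instance : Inv (Heis k p d) := ⟨fun a => (a.1⁻¹ * a.2.2 a.2.1, a.2.1⁻¹, a.2.2⁻¹)⟩

theorem mul_def (a b : Heis k p d) :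
    a * b = (a.1 * b.1 * b.2.2 a.2.1, a.2.1 * b.2.1, a.2.2 * b.2.2) := rfl

theorem one_def : (1 : Heis k p d) = ((1 : kˣ), 1, 1) := rfl

theorem inv_def (a : Heis k p d) :
    a⁻¹ = (a.1⁻¹ * a.2.2 a.2.1, a.2.1⁻¹, a.2.2⁻¹) := rfl

theorem mul_assoc' (a b c : Heis k p d) : a * b * c = a * (b * c) := by
  obtain ⟨α, x, χ⟩ := a
  obtain ⟨β, y, ψ⟩ := b
  obtain ⟨γ, z, ω⟩ := c
  refine Prod.ext ?_ (Prod.ext ?_ ?_)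
  · show α * β * ψ x * γ * (ω (x * y)) = α * (β * γ * ω y) * ((ψ * ω) x)
    simp [map_mul, MonoidHom.mul_apply, mul_assoc, mul_comm, mul_left_comm]
  · exact mul_assoc x y z
  · exact mul_assoc χ ψ ω

theorem one_mul' (a : Heis k p d) : 1 * a = a := by
  obtain ⟨α, x, χ⟩ := a
  refine Prod.ext ?_ (Prod.ext ?_ ?_)
  · show 1 * α * χ 1 = α
    simp
  · exact one_mul x
  · exact one_mul χ

theorem mul_one' (a : Heis k p d) : a * 1 = a := by
  obtain ⟨α, x, χ⟩ := a
  refine Prod.ext ?_ (Prod.ext ?_ ?_)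
  · show α * 1 * (1 : ThetaK2 k p d) x = α
    simp
  · exact mul_one x
  · exact mul_one χ

theorem inv_mul_cancel' (a : Heis k p d) : a⁻¹ * a = 1 := by
  obtain ⟨α, x, χ⟩ := a
  refine Prod.ext ?_ (Prod.ext ?_ ?_)
  · show α⁻¹ * χ x * α * χ (x⁻¹) = 1
    simp [map_inv, mul_comm, mul_left_comm]
  · exact inv_mul_cancel x
  · exact inv_mul_cancel χ

instance : Group (Heis k p d) where
  mul_assoc := mul_assoc'
  one_mul := one_mul'
  mul_one := mul_one'
  inv_mul_cancel := inv_mul_cancel'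

/-- The multiplication rule of the Heisenberg-type group. -/
theorem mk_mul (α β : kˣ) (x y : ThetaK1 p d) (χ ψ : ThetaK2 k p d) :
    mk α x χ * mk β y ψ = mk (α * β * ψ x) (x * y) (χ * ψ) := rfl

end Heis

section Reps

variable {k : Type} [Field k]

/-- A subspace stable under a representation. -/
def RepStable {G V : Type} [Group G] [AddCommGroup V] [Module k V]
    (ρ : G →* (V →ₗ[k] V)ˣ) (W : Submodule k V) : Prop :=
  ∀ (g : G), ∀ w ∈ W, (ρ g : V →ₗ[k] V) w ∈ W

/-- Irreducibility: nonzero and no nontrivial stable subspace. -/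
def RepIrred {G V : Type} [Group G] [AddCommGroup V] [Module k V]
    (ρ : G →* (V →ₗ[k] V)ˣ) : Prop :=
  (∃ v : V, v ≠ 0) ∧
  ∀ W : Submodule k V, RepStable ρ W → W = ⊥ ∨ W = ⊤

/-- Isomorphism of representations of `G`. -/
def RepIso {G V W : Type} [Group G] [AddCommGroup V] [Module k V]
    [AddCommGroup W] [Module k W]
    (ρ : G →* (V →ₗ[k] V)ˣ) (τ : G →* (W →ₗ[k] W)ˣ) : Prop :=
  ∃ e : V ≃ₗ[k] W, ∀ (g : G) (v : V), e ((ρ g : V →ₗ[k] V) v) = (τ g : W →ₗ[k] W) (e v)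

variable {p : ℕ} {d : Fin p → ℕ}

/-- A representation of the Heisenberg-type group has weight `n` if `kˣ ⊆ G` acts through the
character `α ↦ αⁿ`. -/
def IsWeight (n : ℤ) {V : Type} [AddCommGroup V] [Module k V]
    (ρ : Heis k p d →* (V →ₗ[k] V)ˣ) : Prop :=
  ∀ (α : kˣ) (v : V), (ρ (Heis.mk α 1 1) : V →ₗ[k] V) v = ((α ^ n : kˣ) : k) • v

/-- `D n = (d₁⋯d_p)/(gcd(n,d₁)⋯gcd(n,d_p))`. -/
def ThetaD (p : ℕ) (d : Fin p → ℕ) (n : ℤ) : ℕ :=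
  (∏ i, d i) / ∏ i, Int.gcd n (d i)

end Reps

/-!
Write `A x` and `B χ` for the actions of `x ∈ K₁` and `χ ∈ K₂`. On a weight-`n` module the group
law becomes `A x ∘ B χ = χ(x)ⁿ • B χ ∘ A x`, so `B χ` sends a `K₁`-weight vector of weight `σ` to
one of weight `χⁿσ`. Let `Φ : χ ↦ χⁿ` be the `n`-th power map of `K₂`.

* Every nonzero stable subspace contains a `K₁`-weight vector `v`; choosing `χ_r` with `χ_rⁿ = r`
  for each `r ∈ im Φ`, the vectors `B χ_r v` have the distinct weights `rσ`, so the subspace has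
  dimension at least `|im Φ|`.
* `K₁` and `B (ker Φ)` commute, so they have a common eigenvector `v`; the span of the `B χ v` is
  stable, and it is spanned by the `B χ_r v`, so it has dimension at most `|im Φ|`.

Finally `char k ∤ dᵢ` makes `K₂ ≅ K₁`, so `|im Φ| = |K₁| / |ker Φ| = ∏ dᵢ / ∏ gcd(n, dᵢ)`.
-/

namespace Module.End

variable {K V : Type*} [Field K] [AddCommGroup V] [Module K V]

theorem units_apply_ne_zero (u : (V →ₗ[K] V)ˣ) {v : V} (hv : v ≠ 0) : (u : V →ₗ[K] V) v ≠ 0 :=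
  (map_ne_zero_iff _ ((isUnit_iff _).mp u.isUnit).injective).mpr hv

theorem exists_common_eigenvector [IsAlgClosed K] [FiniteDimensional K V] {ι : Type*}
    (f : ι → Module.End K V) (hf : ∀ i j, Commute (f i) (f j)) {U : Submodule K V}
    (hU : U ≠ ⊥) (hUf : ∀ i, ∀ u ∈ U, f i u ∈ U) :
    ∃ v ∈ U, v ≠ 0 ∧ ∀ i, ∃ c : K, f i v = c • v := by
  let IsInvariant (W : Submodule K V) : Prop := W ≠ ⊥ ∧ W ≤ U ∧ ∀ i, ∀ w ∈ W, f i w ∈ W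
  obtain ⟨W, ⟨hW0, hWU, hWf⟩, hWmin⟩ :=
    exists_minimal_of_wellFoundedLT IsInvariant ⟨U, hU, le_rfl, hUf⟩
  obtain ⟨v, hvW, hv0⟩ := W.ne_bot_iff.mp hW0
  refine ⟨v, hWU hvW, hv0, fun i => ?_⟩
  have : Nontrivial W := Submodule.nontrivial_iff_ne_bot.mpr hW0
  obtain ⟨μ, hμ⟩ := exists_eigenvalue ((f i).restrict (hWf i))
  obtain ⟨w, hw, hw0⟩ := hμ.exists_hasEigenvector
  -- the `μ`-eigenvectors of `f i` in `W` form a nonzero invariant subspace, hence all of `W`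
  have hE : IsInvariant (W ⊓ eigenspace (f i) μ) := by
    refine ⟨?_, inf_le_left.trans hWU, fun j u ⟨huW, huE⟩ => ⟨hWf j u huW, ?_⟩⟩
    · refine (Submodule.ne_bot_iff _).mpr ⟨w, ⟨w.2, ?_⟩, by simpa using hw0⟩
      exact mem_eigenspace_iff.mpr (congrArg Subtype.val (mem_eigenspace_iff.mp hw))
    · rw [SetLike.mem_coe, mem_eigenspace_iff] at huE ⊢
      rw [← mul_apply, (hf i j).eq, mul_apply, huE, map_smul]
  have hWE : W ≤ eigenspace (f i) μ := (hWmin hE inf_le_left).trans inf_le_right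
  exact ⟨μ, mem_eigenspace_iff.mp (hWE hvW)⟩

theorem linearIndependent_of_forall_apply_eq_smul {ι κ : Type*} (f : ι → Module.End K V)
    (hf : ∀ i j, Commute (f i) (f j)) {χ : κ → ι → K} (hχ : Function.Injective χ)
    {v : κ → V} (hv0 : ∀ a, v a ≠ 0) (hv : ∀ a i, f i (v a) = χ a i • v a) :
    LinearIndependent K v :=
  ((independent_iInf_maxGenEigenspace_of_forall_mapsTo f
    fun i j μ => mapsTo_maxGenEigenspace_of_comm (hf j i) μ).comp hχ).linearIndependent
    _ (fun a => Submodule.mem_iInf _ |>.mpr fun i =>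
      eigenspace_le_maxGenEigenspace (mem_eigenspace_iff.mpr (hv a i))) hv0

end Module.End

theorem exists_monoidHom_forall_apply_eq_smul {M K V : Type*} [Monoid M] [Field K]
    [AddCommGroup V] [Module K V] (π : M →* (V →ₗ[K] V)ˣ) {v : V} (hv : v ≠ 0)
    (h : ∀ m, ∃ c : K, (π m : V →ₗ[K] V) v = c • v) :
    ∃ σ : M →* Kˣ, ∀ m, (π m : V →ₗ[K] V) v = (σ m : K) • v := by
  choose c hc using h
  have hc0 (m : M) : c m ≠ 0 := by
    intro h0
    exact Module.End.units_apply_ne_zero (π m) hv (by rw [hc, h0, zero_smul])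
  have hc_mul (m m' : M) : c (m * m') = c m * c m' := by
    refine smul_left_injective K hv ?_
    change c (m * m') • v = (c m * c m') • v
    rw [← hc, map_mul, Units.val_mul, Module.End.mul_apply, hc m', map_smul, hc m, mul_smul,
      smul_comm]
  have hc_one : c 1 = 1 := by
    refine smul_left_injective K hv ?_
    change c 1 • v = (1 : K) • v
    rw [← hc, map_one, Units.val_one, Module.End.one_apply, one_smul]
  exact ⟨{ toFun := fun m => Units.mk0 (c m) (hc0 m)
           map_one' := Units.ext hc_one
           map_mul' := fun m m' => Units.ext (hc_mul m m') }, hc⟩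

theorem IsCyclic.card_zpowGroupHom_ker (G : Type*) [CommGroup G] [IsCyclic G] [Finite G]
    (n : ℤ) : Nat.card (zpowGroupHom n : G →* G).ker = Int.gcd n (Nat.card G) := by
  have hker : (zpowGroupHom n : G →* G).ker = (powMonoidHom n.natAbs : G →* G).ker := by
    ext g
    rcases Int.natAbs_eq n with h | h <;> rw [h] <;> simp
  rw [hker, IsCyclic.card_powMonoidHom_ker, Nat.gcd_comm]
  rfl

theorem card_zpowGroupHom_ker_pi {ι : Type*} [Fintype ι] (G : ι → Type*)
    [∀ i, CommGroup (G i)] (n : ℤ) :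
    Nat.card (zpowGroupHom n : (∀ i, G i) →* ∀ i, G i).ker
      = ∏ i, Nat.card (zpowGroupHom n : G i →* G i).ker := by
  rw [← Nat.card_pi]
  refine Nat.card_congr ((Equiv.subtypeEquivRight fun g => ?_).trans Equiv.subtypePiEquivPi)
  simp [funext_iff]

theorem MulEquiv.card_zpowGroupHom_ker {G H : Type*} [CommGroup G] [CommGroup H] (e : G ≃* H)
    (n : ℤ) :
    Nat.card (zpowGroupHom n : G →* G).ker = Nat.card (zpowGroupHom n : H →* H).ker :=
  Nat.card_congr (e.toEquiv.subtypeEquiv fun g => by simp [← map_zpow])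

theorem Nat.card_multiplicative_zmod (N : ℕ) : Nat.card (Multiplicative (ZMod N)) = N :=
  (Nat.card_congr Multiplicative.toAdd).trans (Nat.card_zmod N)

section Duality

variable {k : Type} [Field k] {p : ℕ} {d : Fin p → ℕ}

theorem card_thetaK1 : Nat.card (ThetaK1 p d) = ∏ i, d i := by
  simp only [Nat.card_pi, Nat.card_multiplicative_zmod]

theorem card_zpowGroupHom_ker_thetaK1 [∀ i, NeZero (d i)] (n : ℤ) :
    Nat.card (zpowGroupHom n : ThetaK1 p d →* ThetaK1 p d).ker = ∏ i, Int.gcd n (d i) := by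
  simp only [card_zpowGroupHom_ker_pi, IsCyclic.card_zpowGroupHom_ker,
    Nat.card_multiplicative_zmod]

theorem neZero_of_not_ringChar_dvd {m : ℕ} (h : ¬ ringChar k ∣ m) : NeZero m :=
  ⟨fun hm => h (hm ▸ dvd_zero _)⟩

variable [IsAlgClosed k]

theorem nonempty_thetaK2_mulEquiv_thetaK1 (hchar : ∀ i, ¬ ringChar k ∣ d i) :
    Nonempty (ThetaK2 k p d ≃* ThetaK1 p d) := by
  have := fun i => neZero_of_not_ringChar_dvd (hchar i)
  have : NeZero ((Monoid.exponent (ThetaK1 p d) : ℕ) : k) := by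
    obtain ⟨c, hc⟩ := Group.exponent_dvd_nat_card (G := ThetaK1 p d)
    have hcard : ((Nat.card (ThetaK1 p d) : ℕ) : k) ≠ 0 := by
      rw [card_thetaK1, Nat.cast_prod]
      exact Finset.prod_ne_zero_iff.mpr fun i _ => (ringChar.spec k (d i)).not.mpr (hchar i)
    exact ⟨fun h => hcard (by rw [hc, Nat.cast_mul, h, zero_mul])⟩
  exact CommGroup.monoidHom_mulEquiv_of_hasEnoughRootsOfUnity (ThetaK1 p d) k

theorem finite_thetaK2 (hchar : ∀ i, ¬ ringChar k ∣ d i) : Finite (ThetaK2 k p d) := by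
  have := fun i => neZero_of_not_ringChar_dvd (hchar i)
  obtain ⟨e⟩ := nonempty_thetaK2_mulEquiv_thetaK1 hchar
  exact Finite.of_equiv _ e.symm.toEquiv

theorem card_zpowGroupHom_range_thetaK2 (hchar : ∀ i, ¬ ringChar k ∣ d i) (n : ℤ) :
    Nat.card (zpowGroupHom (α := ThetaK2 k p d) n).range = ThetaD p d n := by
  have := fun i => neZero_of_not_ringChar_dvd (hchar i)
  obtain ⟨e⟩ := nonempty_thetaK2_mulEquiv_thetaK1 hchar
  have hker := MulEquiv.card_zpowGroupHom_ker (G := ThetaK2 k p d) (H := ThetaK1 p d) e n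
  rw [card_zpowGroupHom_ker_thetaK1] at hker
  have hlagrange := Subgroup.card_mul_index (zpowGroupHom (α := ThetaK2 k p d) n).ker
  rw [Subgroup.index_ker, hker, Nat.card_congr e.toEquiv, card_thetaK1] at hlagrange
  rw [ThetaD, ← hlagrange, Nat.mul_div_cancel_left _ (Finset.prod_pos fun i _ => ?_)]
  exact Int.gcd_pos_of_ne_zero_right _ (by exact_mod_cast NeZero.ne (d i))

end Duality

namespace Heis

variable {k : Type} [Field k] {p : ℕ} {d : Fin p → ℕ}

def ofK1 : ThetaK1 p d →* Heis k p d where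
  toFun x := mk 1 x 1
  map_one' := rfl
  map_mul' x y := by
    rw [mk_mul]
    congr 1 <;> ext <;> simp

def ofK2 : ThetaK2 k p d →* Heis k p d where
  toFun χ := mk 1 1 χ
  map_one' := rfl
  map_mul' χ ψ := by
    rw [mk_mul]
    congr 1 <;> ext <;> simp

theorem ofK1_apply (x : ThetaK1 p d) : (ofK1 x : Heis k p d) = mk 1 x 1 := rfl

theorem ofK2_apply (χ : ThetaK2 k p d) : ofK2 χ = mk 1 1 χ := rfl

theorem mk_eq_mul (α : kˣ) (x : ThetaK1 p d) (χ : ThetaK2 k p d) :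
    mk α x χ = mk α 1 1 * (ofK2 χ * ofK1 x) := by
  rw [ofK1_apply, ofK2_apply, mk_mul, mk_mul]
  congr 1 <;> ext <;> simp

theorem ofK1_mul_ofK2 (x : ThetaK1 p d) (χ : ThetaK2 k p d) :
    ofK1 x * ofK2 χ = mk (χ x) 1 1 * (ofK2 χ * ofK1 x) := by
  rw [ofK1_apply, ofK2_apply, mk_mul, mk_mul, mk_mul]
  congr 1 <;> ext <;> simp

end Heis

section Representation

variable {k : Type} [Field k] {p : ℕ} {d : Fin p → ℕ} {n : ℤ}
  {V : Type} [AddCommGroup V] [Module k V] (ρ : Heis k p d →* (V →ₗ[k] V)ˣ)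

theorem IsWeight.apply_mk (hw : IsWeight n ρ) (α : kˣ) (x : ThetaK1 p d) (χ : ThetaK2 k p d)
    (v : V) : (ρ (Heis.mk α x χ) : V →ₗ[k] V) v
      = ((α ^ n : kˣ) : k) • (ρ (Heis.ofK2 χ) : V →ₗ[k] V) ((ρ (Heis.ofK1 x) : V →ₗ[k] V) v) := by
  rw [Heis.mk_eq_mul, map_mul, map_mul, Units.val_mul, Units.val_mul, Module.End.mul_apply, hw]
  rfl

theorem IsWeight.ofK1_apply_ofK2_apply (hw : IsWeight n ρ) (x : ThetaK1 p d)
    (χ : ThetaK2 k p d) (v : V) :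
    (ρ (Heis.ofK1 x) : V →ₗ[k] V) ((ρ (Heis.ofK2 χ) : V →ₗ[k] V) v)
      = ((χ x ^ n : kˣ) : k) • (ρ (Heis.ofK2 χ) : V →ₗ[k] V) ((ρ (Heis.ofK1 x) : V →ₗ[k] V) v) := by
  rw [← Module.End.mul_apply, ← Units.val_mul, ← map_mul, Heis.ofK1_mul_ofK2, map_mul,
    Units.val_mul, Module.End.mul_apply, hw, map_mul, Units.val_mul, Module.End.mul_apply]

theorem ofK2_apply_ofK2_apply (χ ψ : ThetaK2 k p d) (v : V) :
    (ρ (Heis.ofK2 χ) : V →ₗ[k] V) ((ρ (Heis.ofK2 ψ) : V →ₗ[k] V) v)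
      = (ρ (Heis.ofK2 (χ * ψ)) : V →ₗ[k] V) v := by
  rw [map_mul, map_mul, Units.val_mul, Module.End.mul_apply]

theorem commute_ofK1_ofK1 (x y : ThetaK1 p d) :
    Commute (ρ (Heis.ofK1 x) : V →ₗ[k] V) (ρ (Heis.ofK1 y)) :=
  ((Commute.all x y).map (ρ.comp Heis.ofK1)).units_val

theorem commute_ofK2_ofK2 (χ ψ : ThetaK2 k p d) :
    Commute (ρ (Heis.ofK2 χ) : V →ₗ[k] V) (ρ (Heis.ofK2 ψ)) :=
  ((Commute.all χ ψ).map (ρ.comp Heis.ofK2)).units_val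

theorem IsWeight.commute_ofK1_ofK2 (hw : IsWeight n ρ) (x : ThetaK1 p d) {χ : ThetaK2 k p d}
    (hχ : χ ^ n = 1) : Commute (ρ (Heis.ofK1 x) : V →ₗ[k] V) (ρ (Heis.ofK2 χ)) := by
  refine LinearMap.ext fun v => ?_
  rw [Module.End.mul_apply, Module.End.mul_apply, hw.ofK1_apply_ofK2_apply,
    ← MonoidHom.zpow_apply, hχ]
  simp

def IsK1WeightVector (σ : ThetaK2 k p d) (v : V) : Prop :=
  ∀ x, (ρ (Heis.ofK1 x) : V →ₗ[k] V) v = ((σ x : kˣ) : k) • v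

theorem IsK1WeightVector.ofK2_apply (hw : IsWeight n ρ) {σ : ThetaK2 k p d} {v : V}
    (hv : IsK1WeightVector ρ σ v) (χ : ThetaK2 k p d) :
    IsK1WeightVector ρ (χ ^ n * σ) ((ρ (Heis.ofK2 χ) : V →ₗ[k] V) v) := by
  intro x
  rw [hw.ofK1_apply_ofK2_apply, hv x, map_smul, smul_smul]
  rfl

def spanK2Orbit (v : V) : Submodule k V :=
  Submodule.span k (Set.range fun χ => (ρ (Heis.ofK2 χ) : V →ₗ[k] V) v)

theorem mem_spanK2Orbit_self (v : V) : v ∈ spanK2Orbit ρ v :=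
  Submodule.subset_span ⟨1, by simp⟩

theorem IsK1WeightVector.repStable_spanK2Orbit (hw : IsWeight n ρ) {σ : ThetaK2 k p d} {v : V}
    (hv : IsK1WeightVector ρ σ v) : RepStable ρ (spanK2Orbit ρ v) := by
  rintro ⟨α, x, χ'⟩ w hw'
  refine (Submodule.span_le (p := (spanK2Orbit ρ v).comap (ρ (Heis.mk α x χ') : V →ₗ[k] V)).mpr
    (Set.range_subset_iff.mpr fun χ => ?_)) hw'
  rw [SetLike.mem_coe, Submodule.mem_comap, hw.apply_mk, (hv.ofK2_apply ρ hw χ) x, map_smul,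
    ofK2_apply_ofK2_apply]
  exact Submodule.smul_mem _ _ (Submodule.smul_mem _ _ (Submodule.subset_span ⟨χ' * χ, rfl⟩))

variable [FiniteDimensional k V]

theorem finrank_spanK2Orbit_le [Finite (ThetaK2 k p d)] {v : V}
    (hv : ∀ κ ∈ (zpowGroupHom (α := ThetaK2 k p d) n).ker,
      ∃ c : k, (ρ (Heis.ofK2 κ) : V →ₗ[k] V) v = c • v) :
    Module.finrank k (spanK2Orbit ρ v) ≤ Nat.card (zpowGroupHom (α := ThetaK2 k p d) n).range := by
  set Φ := zpowGroupHom (α := ThetaK2 k p d) n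
  let s := Function.surjInv Φ.rangeRestrict_surjective
  have hs (χ : ThetaK2 k p d) : s (Φ.rangeRestrict χ) ^ n = χ ^ n :=
    congrArg Subtype.val (Function.surjInv_eq Φ.rangeRestrict_surjective _)
  -- modulo `ker Φ`, every `χ` is one of the representatives `s r` of the classes `r ∈ range Φ`
  have hle : spanK2Orbit ρ v ≤ Submodule.span k
      (Set.range fun r : Φ.range => (ρ (Heis.ofK2 (s r)) : V →ₗ[k] V) v) := by
    refine Submodule.span_le.mpr (Set.range_subset_iff.mpr fun χ => ?_)
    set κ := (s (Φ.rangeRestrict χ))⁻¹ * χ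
    have hκ : κ ∈ Φ.ker := by
      rw [MonoidHom.mem_ker, zpowGroupHom_apply, mul_zpow (α := ThetaK2 k p d),
        inv_zpow (α := ThetaK2 k p d), hs, inv_mul_cancel (G := ThetaK2 k p d)]
    obtain ⟨c, hc⟩ := hv κ hκ
    rw [SetLike.mem_coe, ← mul_inv_cancel_left (s (Φ.rangeRestrict χ)) χ,
      ← ofK2_apply_ofK2_apply, hc, map_smul]
    exact Submodule.smul_mem _ _ (Submodule.subset_span ⟨_, rfl⟩)
  have := Fintype.ofFinite Φ.range
  rw [Nat.card_eq_fintype_card]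
  exact (Submodule.finrank_mono hle).trans (finrank_range_le_card _)

variable [IsAlgClosed k]

theorem exists_isK1WeightVector_mem {W : Submodule k V} (hW : RepStable ρ W) (hW0 : W ≠ ⊥) :
    ∃ v ∈ W, v ≠ 0 ∧ ∃ σ, IsK1WeightVector ρ σ v := by
  obtain ⟨v, hvW, hv0, hc⟩ := Module.End.exists_common_eigenvector
    (fun x => (ρ (Heis.ofK1 x) : V →ₗ[k] V)) (commute_ofK1_ofK1 ρ) hW0 fun x => hW _
  exact ⟨v, hvW, hv0, exists_monoidHom_forall_apply_eq_smul (ρ.comp Heis.ofK1) hv0 hc⟩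

theorem IsWeight.card_zpowGroupHom_range_le_finrank (hw : IsWeight n ρ) {W : Submodule k V}
    (hW : RepStable ρ W) (hW0 : W ≠ ⊥) :
    Nat.card (zpowGroupHom (α := ThetaK2 k p d) n).range ≤ Module.finrank k W := by
  obtain ⟨w, hwW, hw0, σ, hσ⟩ := exists_isK1WeightVector_mem ρ hW hW0
  set Φ := zpowGroupHom (α := ThetaK2 k p d) n
  let s := Function.surjInv Φ.rangeRestrict_surjective
  have hs (r : Φ.range) : s r ^ n = r :=
    congrArg Subtype.val (Function.surjInv_eq Φ.rangeRestrict_surjective r)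
  let u (r : Φ.range) : W := ⟨(ρ (Heis.ofK2 (s r)) : V →ₗ[k] V) w, hW _ _ hwW⟩
  -- `u r` has `K₁`-weight `r * σ`, and these weights are pairwise distinct
  have hu : LinearIndependent k u := by
    refine LinearIndependent.of_comp W.subtype <|
      Module.End.linearIndependent_of_forall_apply_eq_smul _ (commute_ofK1_ofK1 ρ)
        (χ := fun (r : Φ.range) x => (((r : ThetaK2 k p d) * σ) x : k)) (v := W.subtype ∘ u)
        (fun r r' h => ?_) (fun r => Module.End.units_apply_ne_zero _ hw0) fun r x => ?_
    · have : (r : ThetaK2 k p d) * σ = r' * σ := MonoidHom.ext fun x => Units.ext (congrFun h x)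
      exact Subtype.ext (mul_right_cancel this)
    · simpa [hs] using hσ.ofK2_apply ρ hw (s r) x
  have := hu.finite
  have := Fintype.ofFinite Φ.range
  rw [Nat.card_eq_fintype_card]
  exact hu.fintype_card_le_finrank

theorem IsWeight.exists_isK1WeightVector_forall_ker_eigen [Nontrivial V] (hw : IsWeight n ρ) :
    ∃ v : V, v ≠ 0 ∧ (∃ σ, IsK1WeightVector ρ σ v) ∧
      ∀ κ ∈ (zpowGroupHom (α := ThetaK2 k p d) n).ker,
        ∃ c : k, (ρ (Heis.ofK2 κ) : V →ₗ[k] V) v = c • v := by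
  let f : ThetaK1 p d ⊕ (zpowGroupHom (α := ThetaK2 k p d) n).ker → Module.End k V :=
    Sum.elim (fun x => ρ (Heis.ofK1 x)) (fun κ => ρ (Heis.ofK2 κ))
  have hf : ∀ i j, Commute (f i) (f j) := by
    rintro (x | κ) (y | κ')
    · exact commute_ofK1_ofK1 ρ x y
    · exact hw.commute_ofK1_ofK2 ρ x κ'.2
    · exact (hw.commute_ofK1_ofK2 ρ y κ.2).symm
    · exact commute_ofK2_ofK2 ρ κ κ'
  obtain ⟨v, -, hv0, hfv⟩ :=
    Module.End.exists_common_eigenvector f hf top_ne_bot fun _ _ _ => trivial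
  exact ⟨v, hv0, exists_monoidHom_forall_apply_eq_smul (ρ.comp Heis.ofK1) hv0 fun x => hfv (.inl x),
    fun κ hκ => hfv (.inr ⟨κ, hκ⟩)⟩

theorem IsWeight.exists_repStable_finrank_le [Nontrivial V] [Finite (ThetaK2 k p d)]
    (hw : IsWeight n ρ) :
    ∃ W : Submodule k V, RepStable ρ W ∧ W ≠ ⊥ ∧
      Module.finrank k W ≤ Nat.card (zpowGroupHom (α := ThetaK2 k p d) n).range := by
  obtain ⟨v, hv0, ⟨σ, hσ⟩, hker⟩ := hw.exists_isK1WeightVector_forall_ker_eigen ρ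
  exact ⟨spanK2Orbit ρ v, hσ.repStable_spanK2Orbit ρ hw,
    (Submodule.ne_bot_iff _).mpr ⟨v, mem_spanK2Orbit_self ρ v, hv0⟩, finrank_spanK2Orbit_le ρ hker⟩

end Representation

theorem stmt6_general {k : Type} [Field k] [IsAlgClosed k] {p : ℕ} {d : Fin p → ℕ}
    (hchar : ∀ i, ¬ (ringChar k ∣ d i))
    (n : ℤ) (V : Type) [AddCommGroup V] [Module k V] [FiniteDimensional k V]
    (ρ : Heis k p d →* (V →ₗ[k] V)ˣ)
    (hw : IsWeight n ρ) :
    RepIrred ρ ↔ Module.finrank k V = ThetaD p d n := by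
  have := finite_thetaK2 hchar
  rw [← card_zpowGroupHom_range_thetaK2 hchar n]
  constructor
  · rintro ⟨⟨v, hv⟩, hirr⟩
    have : Nontrivial V := nontrivial_of_ne v 0 hv
    obtain ⟨W, hW, hW0, hWle⟩ := hw.exists_repStable_finrank_le ρ
    obtain rfl : W = ⊤ := (hirr W hW).resolve_left hW0
    have hge := hw.card_zpowGroupHom_range_le_finrank ρ hW hW0
    rw [finrank_top] at hWle hge
    exact le_antisymm hWle hge
  · intro hfinrank
    have : Nontrivial V := Module.finrank_pos_iff.mp (hfinrank ▸ Nat.card_pos)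
    refine ⟨exists_ne 0, fun W hW => or_iff_not_imp_left.mpr fun hW0 => ?_⟩
    have hge := hw.card_zpowGroupHom_range_le_finrank ρ hW hW0
    exact Submodule.eq_top_of_finrank_eq ((Submodule.finrank_le W).antisymm (hfinrank ▸ hge))

/-- With `G = kˣ × K₁ × K₂` the Heisenberg-type group of type `(d₁,…,d_p)`,
a weight-`n` `G`-module is irreducible if and only if it has dimension
`D_n = (d₁⋯d_p)/(gcd(n,d₁)⋯gcd(n,d_p))`. -/
theorem stmt6 {k : Type} [Field k] [IsAlgClosed k] {p : ℕ} {d : Fin p → ℕ}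
    (hd0 : ∀ i, 0 < d i) (hchain : ∀ i j : Fin p, i ≤ j → d i ∣ d j)
    (hchar : ∀ i, ¬ (ringChar k ∣ d i))
    (n : ℤ) (V : Type) [AddCommGroup V] [Module k V] [FiniteDimensional k V]
    (ρ : Heis k p d →* (V →ₗ[k] V)ˣ)
    (hw : IsWeight n ρ) :
    RepIrred ρ ↔ Module.finrank k V = ThetaD p d n :=
  stmt6_general hchar n V ρ hw
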